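/- arXiv:1609.06965 — 6 statements merged into one kernel-verified Lean document; each statement's English description precedes it below -/
import Mathlib

section
/- Let F and F' be bounded-below minimal chain complexes of finitely generated free R-modules, and let f : F → F' be a quasi-isomorphism of chain complexes. Then f is an isomorphism of chain complexes. -/
/-!
Induct upward from a degree below which both complexes vanish. If `f` is bijective in degrees
`n - 1` and `n - 2`, a diagram chase using the homology isomorphisms in degrees `n` and `n - 1`
gives `F'ₙ = im fₙ + im d'` and `ker fₙ ⊆ im d`. Minimality puts both images of differentials
inside `m · (-)`, and `m` lies in the Jacobson radical, so Nakayama's lemma makes `fₙ` surjective.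
Then `fₙ` splits over the projective `F'ₙ`, so `ker fₙ` is a finitely generated direct summand `K`
of `Fₙ` with `K = m K`, hence zero by Nakayama again.
-/

/-- The submodule `m·M` of an `R`-module `M`, for a left ideal `m` of `R`. -/
def idealSMulTop {R : Type} [Ring R] (m : Ideal R) (M : Type) [AddCommGroup M]
    [Module R M] : Submodule R M :=
  Submodule.span R {z : M | ∃ a ∈ m, ∃ y : M, z = a • y}

/-- A chain complex of `R`-modules is minimal (w.r.t. the ideal `m`) if all its boundary
maps have image contained in `m` times the target. -/
def IsMinimalComplex {R : Type} [Ring R] (m : Ideal R)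
    (F : ChainComplex (ModuleCat R) ℤ) : Prop :=
  ∀ (i j : ℤ) (x : F.X i), F.d i j x ∈ idealSMulTop m ↥(F.X j)

open CategoryTheory

theorem le_ringJacobson_of_forall_mem_iff_mem_nonunits {R : Type*} [Ring R] {m : Ideal R}
    (hloc : ∀ x : R, x ∈ m ↔ x ∈ nonunits R) : m ≤ Ring.jacobson R := by
  intro a ha
  rw [← Ideal.jacobson_bot, Ideal.mem_jacobson_iff]
  intro y
  obtain ⟨u, hu⟩ : IsUnit (y * a + 1) := by
    by_contra hnu
    have h1 : (y * a + 1) - y * a ∈ m := m.sub_mem ((hloc _).2 hnu) (m.mul_mem_left y ha)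
    rw [add_sub_cancel_left] at h1
    exact (hloc 1).1 h1 isUnit_one
  refine ⟨↑u⁻¹, ?_⟩
  rw [mul_assoc, ← mul_add_one, ← hu, Units.inv_mul, sub_self]
  exact Submodule.zero_mem _

section Nakayama

variable {R : Type} [Ring R] {m : Ideal R}

theorem idealSMulTop_eq_smul_top (M : Type) [AddCommGroup M] [Module R M] :
    idealSMulTop m M = m • (⊤ : Submodule R M) := by
  apply le_antisymm
  · rw [idealSMulTop, Submodule.span_le]
    rintro _ ⟨a, ha, y, rfl⟩
    exact Submodule.smul_mem_smul ha trivial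
  · rw [Submodule.smul_le]
    intro a ha y _
    exact Submodule.subset_span ⟨a, ha, y, rfl⟩

theorem map_idealSMulTop_le {M N : Type} [AddCommGroup M] [Module R M] [AddCommGroup N]
    [Module R N] (g : M →ₗ[R] N) : (idealSMulTop m M).map g ≤ idealSMulTop m N := by
  rw [idealSMulTop_eq_smul_top, idealSMulTop_eq_smul_top, Submodule.map_smul'']
  exact Submodule.smul_mono le_rfl le_top

theorem subsingleton_of_top_le_idealSMulTop (hloc : ∀ x : R, x ∈ m ↔ x ∈ nonunits R)
    {M : Type} [AddCommGroup M] [Module R M] [Module.Finite R M]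
    (h : ⊤ ≤ idealSMulTop m M) : Subsingleton M := by
  rw [← Submodule.subsingleton_iff R, ← subsingleton_iff_bot_eq_top, eq_comm]
  refine Submodule.FG.eq_bot_of_le_jacobson_smul (Module.finite_def.mp ‹_›) (h.trans ?_)
  rw [idealSMulTop_eq_smul_top]
  exact Submodule.smul_mono_left (le_ringJacobson_of_forall_mem_iff_mem_nonunits hloc)

theorem LinearMap.surjective_of_top_le_range_sup_idealSMulTop
    (hloc : ∀ x : R, x ∈ m ↔ x ∈ nonunits R) {M N : Type} [AddCommGroup M] [Module R M]
    [AddCommGroup N] [Module R N] [Module.Finite R N] (g : M →ₗ[R] N)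
    (h : ⊤ ≤ LinearMap.range g ⊔ idealSMulTop m N) : Function.Surjective g := by
  rw [← LinearMap.range_eq_top, ← Submodule.Quotient.subsingleton_iff]
  apply subsingleton_of_top_le_idealSMulTop hloc
  rw [← (Submodule.map_mkQ_eq_top _ _).2 (top_le_iff.1 h)]
  exact map_idealSMulTop_le _

theorem LinearMap.injective_of_ker_le_idealSMulTop
    (hloc : ∀ x : R, x ∈ m ↔ x ∈ nonunits R) {M N : Type} [AddCommGroup M] [Module R M]
    [AddCommGroup N] [Module R N] [Module.Finite R M] [Module.Projective R N] (g : M →ₗ[R] N)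
    (hg : Function.Surjective g) (h : LinearMap.ker g ≤ idealSMulTop m M) :
    Function.Injective g := by
  obtain ⟨s, hs⟩ := Module.projective_lifting_property g LinearMap.id hg
  -- `id - s ∘ g` retracts `M` onto `ker g`, so `ker g` is finite and `m • ker g = ker g`
  let p : M →ₗ[R] LinearMap.ker g := (LinearMap.id - s ∘ₗ g).codRestrict _ fun x => by
    simp [← LinearMap.comp_apply g s, hs]
  have hp : ∀ x : LinearMap.ker g, p x = x := fun x => by
    ext; simp [p, LinearMap.mem_ker.1 x.2]
  have hp_surj : Function.Surjective p := fun x => ⟨x, hp x⟩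
  have : Module.Finite R (LinearMap.ker g) := Module.Finite.of_surjective p hp_surj
  have : Subsingleton (LinearMap.ker g) := by
    refine subsingleton_of_top_le_idealSMulTop hloc fun x _ => ?_
    rw [← hp x]
    exact map_idealSMulTop_le p ⟨x, h x.2, rfl⟩
  rw [← LinearMap.ker_eq_bot, ← Submodule.subsingleton_iff_eq_bot]
  exact this

end Nakayama

namespace CategoryTheory.ShortComplex

variable {R : Type*} [Ring R] {S₁ S₂ : ShortComplex (ModuleCat R)} (φ : S₁ ⟶ S₂)

local notation "H₁" => S₁.moduleCatLeftHomologyData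
local notation "H₂" => S₂.moduleCatLeftHomologyData

lemma moduleCat_cyclesMap'_apply_coe (x : LinearMap.ker S₁.g.hom) :
    (show LinearMap.ker S₂.g.hom from cyclesMap' φ H₁ H₂ x).1 = φ.τ₂ x :=
  congr($(cyclesMap'_i φ H₁ H₂) x)

lemma moduleCat_leftHomologyMap'_mkQ (x : LinearMap.ker S₁.g.hom) :
    leftHomologyMap' φ H₁ H₂ ((LinearMap.range S₁.moduleCatToCycles).mkQ x) =
      (LinearMap.range S₂.moduleCatToCycles).mkQ (cyclesMap' φ H₁ H₂ x) :=
  congr($(leftHomologyπ_naturality' φ H₁ H₂) x)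

variable [QuasiIso φ]

lemma bijective_moduleCat_leftHomologyMap' : Function.Bijective (leftHomologyMap' φ H₁ H₂) := by
  have := (quasiIso_iff_isIso_leftHomologyMap' φ H₁ H₂).1 ‹_›
  exact ConcreteCategory.bijective_of_isIso _

lemma mem_range_f_of_quasiIso {x : S₁.X₂} (hx : S₁.g x = 0)
    (hφx : φ.τ₂ x ∈ LinearMap.range S₂.f.hom) : x ∈ LinearMap.range S₁.f.hom := by
  obtain ⟨u, hu⟩ := hφx
  let k : LinearMap.ker S₁.g.hom := ⟨x, hx⟩
  have h0 : leftHomologyMap' φ H₁ H₂ ((LinearMap.range S₁.moduleCatToCycles).mkQ k) =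
      leftHomologyMap' φ H₁ H₂ 0 := by
    rw [moduleCat_leftHomologyMap'_mkQ, map_zero]
    exact (Submodule.Quotient.mk_eq_zero _).2
      ⟨u, Subtype.ext (hu.trans (moduleCat_cyclesMap'_apply_coe φ k).symm)⟩
  obtain ⟨w, hw⟩ := (Submodule.Quotient.mk_eq_zero _).1
    ((bijective_moduleCat_leftHomologyMap' φ).1 h0)
  exact ⟨w, congr($hw.1)⟩

lemma exists_sub_mem_range_f_of_quasiIso {y : S₂.X₂} (hy : S₂.g y = 0) :
    ∃ x, S₁.g x = 0 ∧ y - φ.τ₂ x ∈ LinearMap.range S₂.f.hom := by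
  let k : LinearMap.ker S₂.g.hom := ⟨y, hy⟩
  obtain ⟨h, hh⟩ := (bijective_moduleCat_leftHomologyMap' φ).2
    ((LinearMap.range S₂.moduleCatToCycles).mkQ k)
  obtain ⟨x, rfl⟩ := Submodule.mkQ_surjective _ h
  rw [moduleCat_leftHomologyMap'_mkQ] at hh
  obtain ⟨u, hu⟩ := (Submodule.Quotient.eq _).1 hh.symm
  refine ⟨x, x.2, u, ?_⟩
  rw [← moduleCat_cyclesMap'_apply_coe]
  exact congr($hu.1)

end CategoryTheory.ShortComplex

namespace HomologicalComplex

variable {R : Type*} [Ring R] {ι : Type*} {c : ComplexShape ι}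
  {K L : HomologicalComplex (ModuleCat R) c}

lemma Hom.comm_apply (f : K ⟶ L) {i j : ι} (x : K.X i) : L.d i j (f.f i x) = f.f j (K.d i j x) :=
  congr($(f.comm i j) x)

lemma d_comp_d_apply (K : HomologicalComplex (ModuleCat R) c) {i j k : ι} (x : K.X i) :
    K.d j k (K.d i j x) = 0 :=
  congr($(K.d_comp_d i j k) x)

variable (f : K ⟶ L) {i j k : ι}

lemma mem_range_d_of_quasiIsoAt (hi : c.prev j = i) (hk : c.next j = k) [QuasiIsoAt f j]
    {x : K.X j} (hx : K.d j k x = 0) (hfx : f.f j x ∈ LinearMap.range (L.d i j).hom) :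
    x ∈ LinearMap.range (K.d i j).hom :=
  have := (quasiIsoAt_iff' f i j k hi hk).1 ‹_›
  ShortComplex.mem_range_f_of_quasiIso ((shortComplexFunctor' _ c i j k).map f) hx hfx

lemma exists_sub_mem_range_d_of_quasiIsoAt (hi : c.prev j = i) (hk : c.next j = k)
    [QuasiIsoAt f j] {y : L.X j} (hy : L.d j k y = 0) :
    ∃ x, K.d j k x = 0 ∧ y - f.f j x ∈ LinearMap.range (L.d i j).hom :=
  have := (quasiIsoAt_iff' f i j k hi hk).1 ‹_›
  ShortComplex.exists_sub_mem_range_f_of_quasiIso ((shortComplexFunctor' _ c i j k).map f) hy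

end HomologicalComplex

namespace ChainComplex

open HomologicalComplex

variable {R : Type*} [Ring R] {F F' : ChainComplex (ModuleCat R) ℤ} (f : F ⟶ F') (n : ℤ)

lemma top_le_range_f_sup_range_d [QuasiIsoAt f n] [QuasiIsoAt f (n - 1)]
    (hsurj : Function.Surjective (f.f (n - 1))) (hinj : Function.Injective (f.f (n - 2))) :
    ⊤ ≤ LinearMap.range (f.f n).hom ⊔ LinearMap.range (F'.d (n + 1) n).hom := by
  intro y _
  obtain ⟨x, hx⟩ := hsurj (F'.d n (n - 1) y)
  have hdx : F.d (n - 1) (n - 2) x = 0 :=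
    hinj (by rw [map_zero, ← Hom.comm_apply, hx, d_comp_d_apply])
  obtain ⟨z, hz⟩ := mem_range_d_of_quasiIsoAt f (i := n) (k := n - 2)
    ((ComplexShape.down ℤ).prev_eq' (by simp)) ((ComplexShape.down ℤ).next_eq' (by simp; omega))
    hdx ⟨y, hx.symm⟩
  have hy : F'.d n (n - 1) (y - f.f n z) = 0 := by
    rw [map_sub, Hom.comm_apply, hz, hx, sub_self]
  obtain ⟨x', -, hx'⟩ := exists_sub_mem_range_d_of_quasiIsoAt f (i := n + 1) (k := n - 1)
    ((ComplexShape.down ℤ).prev_eq' (by simp)) ((ComplexShape.down ℤ).next_eq' (by simp)) hy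
  refine Submodule.mem_sup.2 ⟨f.f n (z + x'), ⟨_, rfl⟩, _, hx', ?_⟩
  rw [map_add]
  abel

lemma ker_f_le_range_d [QuasiIsoAt f n] (hinj : Function.Injective (f.f (n - 1))) :
    LinearMap.ker (f.f n).hom ≤ LinearMap.range (F.d (n + 1) n).hom := by
  intro x (hx : f.f n x = 0)
  have hdx : F.d n (n - 1) x = 0 := hinj (by rw [map_zero, ← Hom.comm_apply, hx, map_zero])
  refine mem_range_d_of_quasiIsoAt f (i := n + 1) (k := n - 1)
    ((ComplexShape.down ℤ).prev_eq' (by simp)) ((ComplexShape.down ℤ).next_eq' (by simp)) hdx ?_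
  rw [hx]
  exact zero_mem _

end ChainComplex

namespace IsMinimalComplex

variable {R : Type} [Ring R] {m : Ideal R}

theorem range_d_le {F : ChainComplex (ModuleCat R) ℤ} (hF : IsMinimalComplex m F)
    (i j : ℤ) : LinearMap.range (F.d i j).hom ≤ idealSMulTop m (F.X j) := by
  rintro _ ⟨x, rfl⟩
  exact hF i j x

theorem bijective_f_of_bijective_f_sub_one
    (hloc : ∀ x : R, x ∈ m ↔ x ∈ nonunits R) {F F' : ChainComplex (ModuleCat R) ℤ}
    (hF : IsMinimalComplex m F) (hF' : IsMinimalComplex m F') (f : F ⟶ F') (n : ℤ)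
    [QuasiIsoAt f n] [QuasiIsoAt f (n - 1)] [Module.Finite R (F.X n)] [Module.Finite R (F'.X n)]
    [Module.Projective R (F'.X n)] (h₁ : Function.Bijective (f.f (n - 1)))
    (h₂ : Function.Injective (f.f (n - 2))) : Function.Bijective (f.f n) := by
  have hsurj : Function.Surjective (f.f n) :=
    (f.f n).hom.surjective_of_top_le_range_sup_idealSMulTop hloc <|
      (ChainComplex.top_le_range_f_sup_range_d f n h₁.2 h₂).trans
        (sup_le_sup_left (hF'.range_d_le _ _) _)
  exact ⟨(f.f n).hom.injective_of_ker_le_idealSMulTop hloc hsurj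
    ((ChainComplex.ker_f_le_range_d f n h₁.1).trans (hF.range_d_le _ _)), hsurj⟩

end IsMinimalComplex

theorem stmt_2_general
    (R : Type) [Ring R]
    (m : Ideal R) (hloc : ∀ x : R, x ∈ m ↔ x ∈ nonunits R)
    (F F' : ChainComplex (ModuleCat R) ℤ)
    (hF_fin : ∀ i, Module.Finite R ↥(F.X i))
    (hF'_free : ∀ i, Module.Free R ↥(F'.X i)) (hF'_fin : ∀ i, Module.Finite R ↥(F'.X i))
    (hF_min : IsMinimalComplex m F) (hF'_min : IsMinimalComplex m F')
    (hF_bdd : ∃ N : ℤ, ∀ i < N, Subsingleton ↥(F.X i))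
    (hF'_bdd : ∃ N : ℤ, ∀ i < N, Subsingleton ↥(F'.X i))
    (f : F ⟶ F') (hf : QuasiIso f) :
    CategoryTheory.IsIso f := by
  obtain ⟨N, hN⟩ := hF_bdd
  obtain ⟨N', hN'⟩ := hF'_bdd
  have hbij (n : ℤ) : Function.Bijective (f.f n) := by
    induction n using Int.strongRec (m := min N N') with
    | lt n hn =>
      have := hN n (by omega)
      have := hN' n (by omega)
      exact ⟨fun a b _ => Subsingleton.elim a b, fun y => ⟨0, Subsingleton.elim _ _⟩⟩
    | ge n _ ih =>
      have := hF_fin n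
      have := hF'_fin n
      have := hF'_free n
      exact hF_min.bijective_f_of_bijective_f_sub_one hloc hF'_min f n
        (ih (n - 1) (by omega)) (ih (n - 2) (by omega)).1
  have (n : ℤ) : IsIso (f.f n) := (ConcreteCategory.isIso_iff_bijective _).2 (hbij n)
  exact HomologicalComplex.Hom.isIso_of_components f

theorem stmt_2
    (R : Type) [Ring R] [IsNoetherianRing R] [Nontrivial R]
    (m : Ideal R) (hloc : ∀ x : R, x ∈ m ↔ x ∈ nonunits R)
    (F F' : ChainComplex (ModuleCat R) ℤ)
    (hF_free : ∀ i, Module.Free R ↥(F.X i)) (hF_fin : ∀ i, Module.Finite R ↥(F.X i))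
    (hF'_free : ∀ i, Module.Free R ↥(F'.X i)) (hF'_fin : ∀ i, Module.Finite R ↥(F'.X i))
    (hF_min : IsMinimalComplex m F) (hF'_min : IsMinimalComplex m F')
    (hF_bdd : ∃ N : ℤ, ∀ i < N, Subsingleton ↥(F.X i))
    (hF'_bdd : ∃ N : ℤ, ∀ i < N, Subsingleton ↥(F'.X i))
    (f : F ⟶ F') (hf : QuasiIso f) :
    CategoryTheory.IsIso f :=
  stmt_2_general R m hloc F F' hF_fin hF'_free hF'_fin hF_min hF'_min hF_bdd hF'_bdd f hf
end

section
/- The map sending an ultrafilter 𝔉 on I to the subset {(a_i)_{i∈I} ∈ A_I : {i ∈ I : a_i ∈ m_A} ∈ 𝔉} is well-defined (each such subset is a prime ideal of A_I) and is a bijection from the set of ultrafilters on I to the set of prime ideals of A_I. -/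
open IsLocalRing Set

section Aux

variable {A : Type} [CommRing A] {I : Type}

/-- Indicator function of a set, valued in a ring. -/
private noncomputable def chi (A : Type) [CommRing A] (S : Set I) : I → A := S.indicator 1

private lemma chi_apply_mem {S : Set I} {i : I} (h : i ∈ S) : chi A S i = 1 :=
  Set.indicator_of_mem h 1

private lemma chi_apply_notMem {S : Set I} {i : I} (h : i ∉ S) : chi A S i = 0 :=
  Set.indicator_of_notMem h 1

private lemma chi_mul (S T : Set I) : (chi A S) * chi A T = chi A (S ∩ T) := by
  funext i
  by_cases hS : i ∈ S <;> by_cases hT : i ∈ T <;>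
    simp [chi, Set.indicator_apply, hS, hT, Set.mem_inter_iff]

private lemma chi_add_compl (S : Set I) : (chi A S) + chi A Sᶜ = 1 := by
  funext i
  by_cases hS : i ∈ S <;> simp [chi, Set.indicator_apply, hS]

private lemma chi_union (S T : Set I) :
    chi A (S ∪ T) = chi A S + chi A T - chi A S * chi A T := by
  funext i
  by_cases hS : i ∈ S <;> by_cases hT : i ∈ T <;>
    simp [chi, Set.indicator_apply, hS, hT]

variable [IsLocalRing A]

private lemma one_notMem_max : (1 : A) ∉ maximalIdeal A :=
  (Ideal.ne_top_iff_one _).mp (maximalIdeal.isMaximal A).ne_top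

private lemma chi_mem_set (S : Set I) :
    {i : I | chi A Sᶜ i ∈ maximalIdeal A} = S := by
  ext i
  by_cases hS : i ∈ S
  · simp [chi_apply_notMem (by simpa using hS : i ∉ Sᶜ), hS]
  · simp [chi_apply_mem (by simpa using hS : i ∈ Sᶜ), hS, one_notMem_max]

/-- The ideal associated to an ultrafilter. -/
private def uIdeal (A : Type) [CommRing A] [IsLocalRing A] {I : Type}
    (𝔉 : Ultrafilter I) : Ideal (I → A) where
  carrier := {a | {i : I | a i ∈ maximalIdeal A} ∈ 𝔉}
  zero_mem' := by
    show {i : I | (0 : I → A) i ∈ maximalIdeal A} ∈ 𝔉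
    have h0 : {i : I | (0 : I → A) i ∈ maximalIdeal A} = Set.univ := by
      ext i; simp
    rw [h0]
    exact Filter.univ_mem
  add_mem' := by
    intro a b ha hb
    refine Filter.mem_of_superset (Filter.inter_mem ha hb) ?_
    intro i hi
    simp only [Set.mem_inter_iff, Set.mem_setOf_eq] at hi ⊢
    exact Ideal.add_mem _ hi.1 hi.2
  smul_mem' := by
    intro c a ha
    refine Filter.mem_of_superset ha ?_
    intro i hi
    simp only [Set.mem_setOf_eq] at hi ⊢
    exact Ideal.mul_mem_left _ _ hi

private lemma mem_uIdeal {𝔉 : Ultrafilter I} {a : I → A} :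
    a ∈ uIdeal A 𝔉 ↔ {i : I | a i ∈ maximalIdeal A} ∈ 𝔉 := Iff.rfl

private lemma uIdeal_prime (𝔉 : Ultrafilter I) : (uIdeal A 𝔉).IsPrime := by
  constructor
  · intro h
    rw [Ideal.eq_top_iff_one, mem_uIdeal] at h
    have : {i : I | (1 : I → A) i ∈ maximalIdeal A} = ∅ := by
      ext i; simp [one_notMem_max]
    rw [this] at h
    exact Ultrafilter.empty_notMem h
  · intro a b hab
    rw [mem_uIdeal] at hab
    have hset : {i : I | (a * b) i ∈ maximalIdeal A}
        = {i : I | a i ∈ maximalIdeal A} ∪ {i : I | b i ∈ maximalIdeal A} := by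
      ext i
      constructor
      · intro h
        simp only [Set.mem_setOf_eq, Pi.mul_apply] at h
        exact ((maximalIdeal.isMaximal A).isPrime.mem_or_mem h)
      · intro h
        simp only [Set.mem_union, Set.mem_setOf_eq] at h
        simp only [Set.mem_setOf_eq, Pi.mul_apply]
        rcases h with h | h
        · exact Ideal.mul_mem_right _ _ h
        · exact Ideal.mul_mem_left _ _ h
    rw [hset, Ultrafilter.union_mem_iff] at hab
    exact hab

end Aux

theorem stmt_3
    (p : ℕ) (hp : p.Prime)
    (A : Type) [CommRing A] [Finite A] [IsLocalRing A] [CharP A p]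
    (I : Type) :
    ∃ e : Ultrafilter I ≃ PrimeSpectrum (I → A),
      ∀ (𝔉 : Ultrafilter I) (a : I → A),
        a ∈ (e 𝔉).asIdeal ↔ {i : I | a i ∈ IsLocalRing.maximalIdeal A} ∈ 𝔉 := by
  classical
  -- nilpotency of the maximal ideal
  obtain ⟨n, hn⟩ : IsNilpotent (maximalIdeal A) := by
    have := IsArtinianRing.isNilpotent_jacobson_bot (R := A)
    rwa [IsLocalRing.jacobson_eq_maximalIdeal ⊥ bot_ne_top] at this
  have hnil : ∀ x : A, x ∈ maximalIdeal A → x ^ (n + 1) = 0 := by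
    intro x hx
    have h1 : x ^ n ∈ maximalIdeal A ^ n := Ideal.pow_mem_pow hx n
    rw [hn] at h1
    rw [pow_succ]
    simp only [Ideal.zero_eq_bot, Ideal.mem_bot] at h1
    rw [h1, zero_mul]
  set f : Ultrafilter I → PrimeSpectrum (I → A) :=
    fun 𝔉 => ⟨uIdeal A 𝔉, uIdeal_prime 𝔉⟩ with hf
  have hinj : Function.Injective f := by
    intro 𝔉 𝔊 h
    ext S
    have key : ∀ ℌ : Ultrafilter I, S ∈ ℌ ↔ chi A Sᶜ ∈ uIdeal A ℌ := by
      intro ℌ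
      rw [mem_uIdeal, chi_mem_set]
    rw [key 𝔉, key 𝔊]
    have : uIdeal A 𝔉 = uIdeal A 𝔊 := congrArg PrimeSpectrum.asIdeal h
    rw [this]
  have hsurj : Function.Surjective f := by
    rintro ⟨P, hP⟩
    -- the filter of sets S with χ_{Sᶜ} ∈ P
    have hmono : ∀ S T : Set I, S ⊆ T → chi A Sᶜ ∈ P → chi A Tᶜ ∈ P := by
      intro S T hST h
      have : chi A Tᶜ = chi A Tᶜ * chi A Sᶜ := by
        rw [chi_mul, Set.inter_eq_self_of_subset_left (Set.compl_subset_compl.mpr hST)]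
      rw [this]
      exact Ideal.mul_mem_left _ _ h
    set F : Filter I :=
      { sets := {S | chi A Sᶜ ∈ P}
        univ_sets := by
          have : chi A (Set.univ : Set I)ᶜ = 0 := by
            funext i; simp [chi_apply_notMem]
          simp only [Set.mem_setOf_eq, this]
          exact P.zero_mem
        sets_of_superset := fun h hST => hmono _ _ hST h
        inter_sets := by
          intro S T hS hT
          simp only [Set.mem_setOf_eq] at *
          have : chi A (S ∩ T)ᶜ = chi A Sᶜ + chi A Tᶜ - chi A Sᶜ * chi A Tᶜ := by
            rw [Set.compl_inter, chi_union]
          rw [this]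
          exact Ideal.sub_mem _ (Ideal.add_mem _ hS hT) (Ideal.mul_mem_right _ _ hS) } with hF
    have memF : ∀ S : Set I, S ∈ F ↔ chi A Sᶜ ∈ P := fun S => Iff.rfl
    have hcompl : ∀ S : Set I, Sᶜ ∉ F ↔ S ∈ F := by
      intro S
      rw [memF, memF, compl_compl]
      have hzero : chi A S * chi A Sᶜ ∈ P := by
        rw [chi_mul, Set.inter_compl_self]
        have : chi A (∅ : Set I) = 0 := by funext i; simp [chi_apply_notMem]
        rw [this]; exact P.zero_mem
      constructor
      · intro h
        rcases hP.mem_or_mem hzero with h' | h'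
        · exact absurd h' h
        · exact h'
      · intro h h'
        apply hP.ne_top
        rw [Ideal.eq_top_iff_one, ← chi_add_compl S]
        exact Ideal.add_mem _ h' h
    set 𝔉 : Ultrafilter I := Ultrafilter.ofComplNotMemIff F hcompl with h𝔉
    have mem𝔉 : ∀ S : Set I, S ∈ 𝔉 ↔ chi A Sᶜ ∈ P := fun S => Iff.rfl
    refine ⟨𝔉, ?_⟩
    have : uIdeal A 𝔉 = P := by
      ext a
      rw [mem_uIdeal, mem𝔉]
      set S := {i : I | a i ∈ maximalIdeal A} with hS
      constructor
      · -- χ_{Sᶜ} ∈ P → a ∈ P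
        intro h
        have h1 : a * chi A Sᶜ ∈ P := Ideal.mul_mem_left _ _ h
        have h2 : a * chi A S ∈ P := by
          apply hP.mem_of_pow_mem (n + 1)
          have hz : (a * chi A S) ^ (n + 1) = 0 := by
            funext i
            by_cases hi : i ∈ S
            · simp only [Pi.pow_apply, Pi.mul_apply, chi_apply_mem hi, mul_one,
                Pi.zero_apply]
              exact hnil _ hi
            · simp [chi_apply_notMem hi]
          rw [hz]
          exact P.zero_mem
        have : a = a * chi A S + a * chi A Sᶜ := by
          rw [← mul_add, chi_add_compl, mul_one]
        rw [this]
        exact Ideal.add_mem _ h2 h1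
      · -- a ∈ P → χ_{Sᶜ} ∈ P
        intro h
        set b : I → A := fun i =>
          if hu : IsUnit (a i) then ↑hu.unit⁻¹ else 0 with hb
        have hba : chi A Sᶜ = b * a := by
          funext i
          by_cases hu : IsUnit (a i)
          · have hiS : i ∈ Sᶜ := by
              simp only [Set.mem_compl_iff, hS, Set.mem_setOf_eq,
                IsLocalRing.mem_maximalIdeal, mem_nonunits_iff, not_not]
              exact hu
            simp only [chi_apply_mem hiS, Pi.mul_apply, hb, dif_pos hu]
            exact (IsUnit.val_inv_mul hu).symm ▸ hu.val_inv_mul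
          · have hiS : i ∉ Sᶜ := by
              simp only [Set.mem_compl_iff, hS, Set.mem_setOf_eq,
                IsLocalRing.mem_maximalIdeal, mem_nonunits_iff, not_not]
              exact hu
            simp [chi_apply_notMem hiS, hb, dif_neg hu]
        rw [hba]
        exact Ideal.mul_mem_left _ _ h
    exact PrimeSpectrum.ext this
  refine ⟨Equiv.ofBijective f ⟨hinj, hsurj⟩, fun 𝔉 a => Iff.rfl⟩
end

section
/- For every prime ideal x of A_I, the composite of the diagonal ring homomorphism A → A_I with the localization map A_I → A_{I,x} is an isomorphism of rings A ≅ A_{I,x}. -/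
/-!
Since `A` is finite, the indicators of the fibres of `f : I → A` are finitely many idempotents
summing to `1`, so one of them lies outside the prime `x`: `f` agrees with a constant `a` on a
set whose indicator is invertible in the localisation, so `f` and `a` have the same image there.
This gives surjectivity. Injectivity and the invertibility of denominators both come from the
nilpotence of the maximal ideal of `A`: a function all of whose values lie in `𝔪_A` is nilpotent,
so it lies in every prime ideal of `A^I`.
-/

open IsLocalRing

section

variable {A : Type*} [CommRing A] {I : Type*}

open Classical in
theorem Pi.exists_indicator_fiber_notMem [Finite A] (x : Ideal (I → A)) [x.IsPrime]
    (f : I → A) :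
    ∃ a : A, (fun i => if f i = a then 1 else 0 : I → A) ∉ x := by
  have := Fintype.ofFinite A
  by_contra! hmem
  have hsum : (∑ a : A, fun i => if f i = a then (1 : A) else 0) = 1 := by
    funext i
    simp [Finset.sum_apply]
  exact Ideal.IsPrime.ne_top ‹_› <| (Ideal.eq_top_iff_one x).2 <|
    hsum ▸ Ideal.sum_mem x fun a _ => hmem a

theorem Pi.exists_algebraMap_eq_algebraMap_const [Finite A] (x : Ideal (I → A)) [x.IsPrime]
    (S : Type*) [CommRing S] [Algebra (I → A) S] [IsLocalization.AtPrime S x] (f : I → A) :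
    ∃ a : A, algebraMap (I → A) S f = algebraMap (I → A) S (Function.const I a) := by
  classical
  obtain ⟨a, he⟩ := Pi.exists_indicator_fiber_notMem x f
  refine ⟨a, (IsLocalization.eq_iff_exists x.primeCompl S).2 ⟨⟨_, he⟩, ?_⟩⟩
  funext i
  by_cases h : f i = a <;> simp [h]

variable [Finite A] [IsLocalRing A]

theorem Pi.mem_of_forall_apply_mem_maximalIdeal (x : Ideal (I → A)) [x.IsPrime] {s : I → A}
    (hs : ∀ i, s i ∈ maximalIdeal A) : s ∈ x := by
  obtain ⟨n, hn⟩ : IsNilpotent (maximalIdeal A) :=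
    jacobson_eq_maximalIdeal (⊥ : Ideal A) bot_ne_top ▸ IsArtinianRing.isNilpotent_jacobson_bot
  have hsn : s ^ n = 0 := by
    funext i
    simpa [hn] using Ideal.pow_mem_pow (hs i) n
  exact ‹x.IsPrime›.mem_of_pow_mem n (hsn ▸ x.zero_mem)

theorem Pi.isUnit_of_const_notMem (x : Ideal (I → A)) [x.IsPrime] {a : A}
    (ha : Function.const I a ∉ x) : IsUnit a := by
  by_contra h
  exact ha (Pi.mem_of_forall_apply_mem_maximalIdeal x fun _ => (mem_maximalIdeal a).2 h)

theorem injective_algebraMap_comp_constRingHom (x : Ideal (I → A)) [x.IsPrime] (S : Type*)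
    [CommRing S] [Algebra (I → A) S] [IsLocalization.AtPrime S x] :
    Function.Injective ((algebraMap (I → A) S).comp (Pi.constRingHom I A)) := by
  refine (injective_iff_map_eq_zero _).2 fun b hb => ?_
  obtain ⟨⟨s, hs⟩, hsb⟩ := (IsLocalization.map_eq_zero_iff x.primeCompl S _).1 hb
  by_contra hb0
  refine hs (Pi.mem_of_forall_apply_mem_maximalIdeal x fun i => ?_)
  refine (mem_maximalIdeal _).2 fun hu => hb0 ?_
  simpa [hu.mul_right_eq_zero] using congrFun hsb i

theorem surjective_algebraMap_comp_constRingHom (x : Ideal (I → A)) [x.IsPrime] (S : Type*)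
    [CommRing S] [Algebra (I → A) S] [IsLocalization.AtPrime S x] :
    Function.Surjective ((algebraMap (I → A) S).comp (Pi.constRingHom I A)) := by
  intro y
  obtain ⟨⟨f, s⟩, rfl⟩ := IsLocalization.mk'_surjective x.primeCompl y
  obtain ⟨a, ha⟩ := Pi.exists_algebraMap_eq_algebraMap_const x S f
  obtain ⟨c, hc⟩ := Pi.exists_algebraMap_eq_algebraMap_const x S s
  have hcu : IsUnit c := Pi.isUnit_of_const_notMem x <|
    (IsLocalization.AtPrime.isUnit_to_map_iff S x _).1 (hc ▸ IsLocalization.map_units S s)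
  refine ⟨a * ↑hcu.unit⁻¹, IsLocalization.eq_mk'_iff_mul_eq.2 ?_⟩
  rw [hc, ha, RingHom.comp_apply, ← map_mul]
  congr 1
  funext i
  simp [mul_assoc]

end

theorem stmt_4_general
    (A : Type) [CommRing A] [Finite A] [IsLocalRing A]
    (I : Type) (x : Ideal (I → A)) [x.IsPrime] :
    Function.Bijective
      ((algebraMap (I → A) (Localization.AtPrime x)).comp (Pi.constRingHom I A)) :=
  ⟨injective_algebraMap_comp_constRingHom x _, surjective_algebraMap_comp_constRingHom x _⟩

theorem stmt_4
    (p : ℕ) (hp : p.Prime)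
    (A : Type) [CommRing A] [Finite A] [IsLocalRing A] [CharP A p]
    (I : Type) (x : Ideal (I → A)) [x.IsPrime] :
    Function.Bijective
      ((algebraMap (I → A) (Localization.AtPrime x)).comp (Pi.constRingHom I A)) :=
  stmt_4_general A I x
end

section
/- Let x be a prime ideal of A_I and let 𝔉_x be the corresponding ultrafilter on I (under the correspondence sending an ultrafilter 𝔉 to the prime ideal {(a_i)_{i∈I} : {i : a_i ∈ m_A} ∈ 𝔉}). Then: (i) for every (b_i)_{i∈I} ∈ B_I there is a unique b ∈ B with {i ∈ I : b_i = b} ∈ 𝔉_x; (ii) the resulting map B_I → B, (b_i) ↦ b, is a ring homomorphism; and (iii) it induces an isomorphism A_{I,x} ⊗_{A_I} B_I ≅ B. -/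
/-!
Along an ultrafilter every family in a finite set is eventually constant, and taking that constant
value is a ring homomorphism `(I → R) →+* R` for every finite ring `R`. Through it `A` is the
localization of `A_I` at `x`: a family outside `x` is eventually outside `m_A`, so its limit is a
unit, and two families with the same limit agree on some `U ∈ 𝔉`, hence become equal after
multiplication by the indicator of `U`, which lies outside `x`. The same argument makes the limit
map `B_I → B` a localization of `A_I`-modules at `x`; a localization of modules is a base change,
so `A_{I,x} ⊗ B_I ≅ A ⊗ B_I ≅ B`.
-/

open scoped TensorProduct

/-- The canonical ring homomorphism `∏ A →+* ∏ B` induced componentwise by `algebraMap A B`. -/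
def piAlgRingHom (A B : Type) [CommRing A] [Ring B] [Algebra A B] (I : Type) :
    (I → A) →+* (I → B) :=
  Pi.ringHom fun i => (algebraMap A B).comp (Pi.evalRingHom (fun _ : I => A) i)

/-- `∏ B` as an algebra over `∏ A` (componentwise); the image is central. -/
noncomputable def piAlgebra (A B : Type) [CommRing A] [Ring B] [Algebra A B] (I : Type) :
    Algebra (I → A) (I → B) :=
  (piAlgRingHom A B I).toAlgebra' fun c x => by
    funext i
    exact Algebra.commutes (c i) (x i)

namespace Ultrafilter

variable {I β γ δ : Type*} (𝔉 : Ultrafilter I)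

theorem exists_eventually_eq_of_finite [Finite β] (b : I → β) : ∃ c, ∀ᶠ i in 𝔉, b i = c :=
  eventually_exists_iff.1 (.of_forall fun _ => ⟨_, rfl⟩)

noncomputable def ulim [Finite β] (b : I → β) : β :=
  (𝔉.exists_eventually_eq_of_finite b).choose

variable {𝔉} [Finite β] [Finite γ] [Finite δ]

variable (𝔉) in
theorem eventually_eq_ulim (b : I → β) : ∀ᶠ i in 𝔉, b i = 𝔉.ulim b :=
  (𝔉.exists_eventually_eq_of_finite b).choose_spec

theorem ulim_mem_iff {b : I → β} {s : Set β} : 𝔉.ulim b ∈ s ↔ ∀ᶠ i in 𝔉, b i ∈ s := by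
  rw [← Filter.eventually_const (f := (𝔉 : Filter I)) (p := 𝔉.ulim b ∈ s)]
  exact Filter.eventually_congr ((𝔉.eventually_eq_ulim b).mono fun i hi => by rw [hi])

theorem ulim_eq_iff {b : I → β} {c : β} : 𝔉.ulim b = c ↔ ∀ᶠ i in 𝔉, b i = c :=
  ulim_mem_iff (s := {c})

theorem ulim_eq_ulim_iff {b b' : I → β} : 𝔉.ulim b = 𝔉.ulim b' ↔ ∀ᶠ i in 𝔉, b i = b' i := by
  rw [ulim_eq_iff]
  exact Filter.eventually_congr ((𝔉.eventually_eq_ulim b').mono fun i hi => by rw [hi])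

theorem ulim_const (c : β) : 𝔉.ulim (fun _ => c) = c :=
  ulim_eq_iff.2 (.of_forall fun _ => rfl)

theorem ulim_comp (g : β → γ) (b : I → β) : 𝔉.ulim (g ∘ b) = g (𝔉.ulim b) :=
  ulim_eq_iff.2 ((𝔉.eventually_eq_ulim b).mono fun _ hi => congrArg g hi)

theorem ulim_map₂ (g : β → γ → δ) (b : I → β) (b' : I → γ) :
    𝔉.ulim (fun i => g (b i) (b' i)) = g (𝔉.ulim b) (𝔉.ulim b') := by
  refine ulim_eq_iff.2 ?_
  filter_upwards [𝔉.eventually_eq_ulim b, 𝔉.eventually_eq_ulim b'] with i h h'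
  rw [h, h']

variable (𝔉) in
noncomputable def ulimRingHom (R : Type*) [Semiring R] [Finite R] : (I → R) →+* R where
  toFun := 𝔉.ulim
  map_one' := ulim_const 1
  map_mul' := ulim_map₂ (· * ·)
  map_zero' := ulim_const 0
  map_add' := ulim_map₂ (· + ·)

end Ultrafilter

namespace IsBaseChange

variable {R S M N : Type*} [CommSemiring R] [CommSemiring S] [Algebra R S] [Semiring M]
  [Algebra R M] [Semiring N] [Algebra S N] [Algebra R N] [IsScalarTower R S N] {f : M →ₐ[R] N}

noncomputable def algEquiv (h : IsBaseChange S f.toLinearMap) : S ⊗[R] M ≃ₐ[S] N :=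
  Algebra.TensorProduct.algEquivOfLinearEquivTensorProduct h.equiv
    (fun _ _ _ _ => by
      simp only [h.equiv_tmul, AlgHom.toLinearMap_apply, map_mul, smul_mul_smul_comm])
    (by rw [h.equiv_tmul, AlgHom.toLinearMap_apply, map_one, one_smul])

theorem algEquiv_tmul (h : IsBaseChange S f.toLinearMap) (s : S) (m : M) :
    h.algEquiv (s ⊗ₜ m) = s • f m :=
  h.equiv_tmul s m

end IsBaseChange

section UltrafilterLocalization

variable {A B I : Type*} [CommRing A] [Finite A] [IsLocalRing A] [Ring B] [Algebra A B] [Finite B]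
  {x : Ideal (I → A)} {𝔉 : Ultrafilter I}

theorem isUnit_ulim_iff_notMem
    (h𝔉 : ∀ a : I → A, a ∈ x ↔ {i : I | a i ∈ IsLocalRing.maximalIdeal A} ∈ 𝔉) {a : I → A} :
    IsUnit (𝔉.ulim a) ↔ a ∉ x := by
  rw [h𝔉, ← IsLocalRing.notMem_maximalIdeal]
  exact Ultrafilter.ulim_mem_iff.not

theorem exists_mem_primeCompl_support_subset [x.IsPrime]
    (h𝔉 : ∀ a : I → A, a ∈ x ↔ {i : I | a i ∈ IsLocalRing.maximalIdeal A} ∈ 𝔉)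
    {U : Set I} (hU : U ∈ 𝔉) : ∃ s ∈ x.primeCompl, Function.support s ⊆ U := by
  refine ⟨U.indicator (1 : I → A), ?_, Set.support_indicator_subset⟩
  have : 𝔉.ulim (U.indicator (1 : I → A)) = 1 :=
    Ultrafilter.ulim_eq_iff.2 (Filter.mem_of_superset hU fun i hi => Set.indicator_of_mem hi 1)
  rw [Ideal.mem_primeCompl_iff, ← isUnit_ulim_iff_notMem h𝔉, this]
  exact isUnit_one

theorem isLocalization_of_ulim [x.IsPrime]
    (h𝔉 : ∀ a : I → A, a ∈ x ↔ {i : I | a i ∈ IsLocalRing.maximalIdeal A} ∈ 𝔉)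
    [Algebra (I → A) A] (h : ∀ a, algebraMap (I → A) A a = 𝔉.ulim a) :
    IsLocalization x.primeCompl A := by
  refine (isLocalization_iff _ _).2 ⟨fun s => ?_, fun z => ⟨(fun _ => z, 1), ?_⟩, fun he => ?_⟩
  · rw [h]
    exact (isUnit_ulim_iff_notMem h𝔉).2 s.2
  · rw [Submonoid.coe_one, map_one, mul_one, h, Ultrafilter.ulim_const]
  · rw [h, h, Ultrafilter.ulim_eq_ulim_iff] at he
    obtain ⟨s, hs, hsupp⟩ := exists_mem_primeCompl_support_subset h𝔉 he
    refine ⟨⟨s, hs⟩, funext fun i => ?_⟩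
    by_cases hi : s i = 0
    · simp [hi]
    · exact congrArg (s i * ·) (hsupp hi)

theorem isLocalizedModule_of_ulim [x.IsPrime]
    (h𝔉 : ∀ a : I → A, a ∈ x ↔ {i : I | a i ∈ IsLocalRing.maximalIdeal A} ∈ 𝔉)
    [Algebra (I → A) B] (f : (I → B) →ₐ[I → A] B) (hf : ∀ b, f b = 𝔉.ulim b) :
    IsLocalizedModule x.primeCompl f.toLinearMap where
  map_units s := by
    have hs : algebraMap (I → A) B s = algebraMap A B (𝔉.ulim s) := by
      rw [← f.commutes, hf]
      exact 𝔉.ulim_comp (algebraMap A B) s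
    have hu := ((isUnit_ulim_iff_notMem h𝔉).2 s.2).map (algebraMap A B)
    rw [Module.End.isUnit_iff]
    convert hu.smul_bijective using 1
    funext b
    rw [Module.algebraMap_end_apply, Algebra.smul_def, hs]
    rfl
  surj y := ⟨(fun _ => y, 1), by simp [hf, Ultrafilter.ulim_const]⟩
  exists_of_eq {b₁ b₂} he := by
    rw [AlgHom.toLinearMap_apply, AlgHom.toLinearMap_apply, hf, hf,
      Ultrafilter.ulim_eq_ulim_iff] at he
    obtain ⟨s, hs, hsupp⟩ := exists_mem_primeCompl_support_subset h𝔉 he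
    refine ⟨⟨s, hs⟩, funext fun i => ?_⟩
    change s i • b₁ i = s i • b₂ i
    by_cases hi : s i = 0
    · rw [hi, zero_smul, zero_smul]
    · rw [hsupp hi]

end UltrafilterLocalization

theorem stmt_5_general
    (A : Type) [CommRing A] [Finite A] [IsLocalRing A]
    (B : Type) [Ring B] [Algebra A B] [Finite B]
    (I : Type) (x : Ideal (I → A)) [x.IsPrime]
    (𝔉 : Ultrafilter I)
    (h𝔉 : ∀ a : I → A, a ∈ x ↔ {i : I | a i ∈ IsLocalRing.maximalIdeal A} ∈ 𝔉) :
    -- (i) unique ultralimit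
    (∀ b : I → B, ∃! c : B, {i : I | b i = c} ∈ 𝔉) ∧
    -- (ii) the ultralimit map is a ring homomorphism, and (iii) it induces an isomorphism
    -- `A_{I,x} ⊗_{A_I} B_I ≅ B`.
    (∃ φ : (I → B) →+* B,
      (∀ b : I → B, {i : I | b i = φ b} ∈ 𝔉) ∧
      (letI : Algebra (I → A) (I → B) := piAlgebra A B I
       ∃ e : (Localization.AtPrime x ⊗[I → A] (I → B)) ≃+* B,
        (∀ b : I → B, e (1 ⊗ₜ b) = φ b) ∧
        (∀ (a : I → A) (b : I → B),
          e (algebraMap (I → A) (Localization.AtPrime x) a ⊗ₜ b)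
            = φ (piAlgRingHom A B I a * b)))) := by
  refine ⟨fun b => ⟨𝔉.ulim b, 𝔉.eventually_eq_ulim b,
    fun _ hc => (Ultrafilter.ulim_eq_iff.2 hc).symm⟩, 𝔉.ulimRingHom B, 𝔉.eventually_eq_ulim, ?_⟩
  let : Algebra (I → A) A := (𝔉.ulimRingHom A).toAlgebra
  let : Algebra (I → A) B := Algebra.compHom B (algebraMap (I → A) A)
  have : IsScalarTower (I → A) A B := .of_algebraMap_eq fun _ => rfl
  have : IsLocalization x.primeCompl A := isLocalization_of_ulim h𝔉 fun _ => rfl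
  have hφ (a : I → A) : 𝔉.ulimRingHom B (piAlgRingHom A B I a) = algebraMap A B (𝔉.ulim a) :=
    𝔉.ulim_comp (algebraMap A B) a
  let φ : (I → B) →ₐ[I → A] B := { 𝔉.ulimRingHom B with commutes' := hφ }
  have : IsLocalizedModule x.primeCompl φ.toLinearMap := isLocalizedModule_of_ulim h𝔉 φ fun _ => rfl
  have hbase := IsLocalizedModule.isBaseChange x.primeCompl A φ.toLinearMap
  let e := (Algebra.TensorProduct.congr (IsLocalization.algEquiv x.primeCompl
      (Localization.AtPrime x) A) AlgEquiv.refl).toRingEquiv.trans hbase.algEquiv.toRingEquiv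
  refine ⟨e, fun b => ?_, fun a b => ?_⟩
  · simp only [e, RingEquiv.trans_apply, AlgEquiv.coe_ringEquiv, Algebra.TensorProduct.congr_apply,
      Algebra.TensorProduct.map_tmul, AlgEquiv.coe_toAlgHom, map_one,
      IsBaseChange.algEquiv_tmul, one_smul]
    rfl
  · simp only [e, RingEquiv.trans_apply, AlgEquiv.coe_ringEquiv, Algebra.TensorProduct.congr_apply,
      Algebra.TensorProduct.map_tmul, AlgEquiv.coe_toAlgHom, AlgEquiv.commutes,
      IsBaseChange.algEquiv_tmul, map_mul, hφ]
    exact Algebra.smul_def _ _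

theorem stmt_5
    (p : ℕ) (hp : p.Prime)
    (A : Type) [CommRing A] [Finite A] [IsLocalRing A] [CharP A p]
    (B : Type) [Ring B] [Algebra A B] [Finite B]
    (I : Type) (x : Ideal (I → A)) [x.IsPrime]
    (𝔉 : Ultrafilter I)
    (h𝔉 : ∀ a : I → A, a ∈ x ↔ {i : I | a i ∈ IsLocalRing.maximalIdeal A} ∈ 𝔉) :
    -- (i) unique ultralimit
    (∀ b : I → B, ∃! c : B, {i : I | b i = c} ∈ 𝔉) ∧
    -- (ii) the ultralimit map is a ring homomorphism, and (iii) it induces an isomorphism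
    -- `A_{I,x} ⊗_{A_I} B_I ≅ B`.
    (∃ φ : (I → B) →+* B,
      (∀ b : I → B, {i : I | b i = φ b} ∈ 𝔉) ∧
      (letI : Algebra (I → A) (I → B) := piAlgebra A B I
       ∃ e : (Localization.AtPrime x ⊗[I → A] (I → B)) ≃+* B,
        (∀ b : I → B, e (1 ⊗ₜ b) = φ b) ∧
        (∀ (a : I → A) (b : I → B),
          e (algebraMap (I → A) (Localization.AtPrime x) a ⊗ₜ b)
            = φ (piAlgRingHom A B I a * b)))) :=
  stmt_5_general A B I x 𝔉 h𝔉
end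

section
/- Assume B is augmented, with augmentation ideal a = ker(B → A), and let b ⊆ B be a two-sided ideal containing a. Let (C(i))_{i∈I} be a family of chain complexes of left B-modules, let x be a prime ideal of A_I, and let C(∞) := A_{I,x} ⊗_{A_I} ∏_{i∈I} C(i). Then the natural map C(∞)/b·C(∞) → A_{I,x} ⊗_{A_I} ∏_{i∈I} (C(i)/b·C(i)) is an isomorphism of chain complexes of B/b-modules. -/
/-!
STATEMENT 7: Fix a prime `p`, a finite commutative local ring `A` of characteristic `p`,
and a finite (possibly non-commutative) `A`-algebra `B` which is augmented, i.e. equipped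
with an `A`-algebra homomorphism `ε : B → A`, with augmentation ideal `a = ker ε`.
Let `b ⊆ B` be a two-sided ideal containing `a`, let `(C(i))_{i∈I}` be a family of chain
complexes of left `B`-modules, let `x` be a prime ideal of `A_I`, and let
`C(∞) := A_{I,x} ⊗_{A_I} ∏_{i∈I} C(i)`.  Then the natural map
`C(∞)/b·C(∞) → A_{I,x} ⊗_{A_I} ∏_{i∈I} (C(i)/b·C(i))` is an isomorphism of chain
complexes of `B/b`-modules.  (We quantify over all incarnations `N` of a term of `C(∞)`
as a `B`-module, with the canonical `B`-structure characterized on pure tensors, and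
express the isomorphism degreewise by its values on the images of pure tensors, which
determine it uniquely.)
-/

open scoped TensorProduct

/-- A product of left `B`-modules, regarded as a module over `∏ A` via the componentwise
action through `algebraMap A B`. -/
noncomputable def piAModule (A B : Type) [CommRing A] [Ring B] [Algebra A B] (I : Type)
    (M : I → Type) [∀ i, AddCommGroup (M i)] [∀ i, Module B (M i)] :
    Module (I → A) (∀ i, M i) :=
  Module.compHom _ (piAlgRingHom A B I)

/-- The submodule `b·M` of a left `B`-module `M`, for a two-sided ideal `b` of `B`. -/
def tsIdealSMulTop {B : Type} [Ring B] (b : TwoSidedIdeal B) (M : Type) [AddCommGroup M]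
    [Module B M] : Submodule B M :=
  Submodule.span B {z : M | ∃ β ∈ b, ∃ y : M, z = β • y}

theorem mem_tsIdealSMulTop_iff {B : Type} [Ring B] (b : TwoSidedIdeal B)
    {M : Type} [AddCommGroup M] [Module B M] (F : Finset B) (hF : ∀ β, β ∈ F ↔ β ∈ b)
    (k : M) :
    k ∈ tsIdealSMulTop b M ↔ ∃ y : B → M, k = ∑ β ∈ F, β • y β := by
  classical
  constructor
  · intro hk
    let S : Submodule B M :=
      { carrier := {k : M | ∃ y : B → M, k = ∑ β ∈ F, β • y β}
        add_mem' := by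
          rintro k k' ⟨y, rfl⟩ ⟨y', rfl⟩
          exact ⟨y + y', by simp [Finset.sum_add_distrib, smul_add]⟩
        zero_mem' := ⟨0, by simp⟩
        smul_mem' := by
          rintro γ k ⟨y, rfl⟩
          refine ⟨fun β' => ∑ β ∈ F.filter (fun β => γ * β = β'), y β, ?_⟩
          calc γ • ∑ β ∈ F, β • y β
              = ∑ β ∈ F, (γ * β) • y β := by
                rw [Finset.smul_sum]
                exact Finset.sum_congr rfl fun β _ => smul_smul γ β (y β)
            _ = ∑ β' ∈ F, ∑ β ∈ F.filter (fun β => γ * β = β'), (γ * β) • y β :=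
                (Finset.sum_fiberwise_of_maps_to
                  (fun β hβ => (hF _).mpr (b.mul_mem_left γ β ((hF β).mp hβ))) _).symm
            _ = ∑ β' ∈ F, β' • ∑ β ∈ F.filter (fun β => γ * β = β'), y β := by
                refine Finset.sum_congr rfl fun β' _ => ?_
                rw [Finset.smul_sum]
                exact Finset.sum_congr rfl fun β hβ => by
                  rw [(Finset.mem_filter.mp hβ).2] }
    have hspan : tsIdealSMulTop b M ≤ S := by
      refine Submodule.span_le.mpr ?_
      rintro z ⟨β, hβ, y0, rfl⟩
      refine ⟨fun β' => if β' = β then y0 else 0, ?_⟩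
      symm
      calc ∑ β' ∈ F, β' • (if β' = β then y0 else 0)
          = ∑ β' ∈ F, (if β' = β then β' • y0 else 0) :=
            Finset.sum_congr rfl fun β' _ => by split <;> simp
        _ = β • y0 := by
            rw [Finset.sum_ite_eq' F β (fun β' => β' • y0), if_pos ((hF β).mpr hβ)]
    exact hspan hk
  · rintro ⟨y, rfl⟩
    exact Submodule.sum_mem _ fun β hβ =>
      Submodule.subset_span ⟨β, (hF β).mp hβ, y β, rfl⟩


set_option maxHeartbeats 1000000 in
set_option synthInstance.maxHeartbeats 400000 in
theorem stmt_7
    (p : ℕ) (hp : p.Prime)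
    (A : Type) [CommRing A] [Finite A] [IsLocalRing A] [CharP A p]
    (B : Type) [Ring B] [Algebra A B] [Finite B]
    (ε : B →ₐ[A] A)                                       -- the augmentation
    (b : TwoSidedIdeal B) (hab : ∀ β : B, ε β = 0 → β ∈ b)  -- b ⊇ a = ker ε
    (I : Type) (x : Ideal (I → A)) [x.IsPrime]
    (C : I → ChainComplex (ModuleCat B) ℤ) :
    ∀ n : ℤ,
      letI : Module (I → A) (∀ i, ↥((C i).X n)) := piAModule A B I _
      letI : Module (I → A) (∀ i, (↥((C i).X n) ⧸ tsIdealSMulTop b ↥((C i).X n))) :=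
        piAModule A B I _
      ∀ (N : Type) [AddCommGroup N] [Module B N]
        (φ : N ≃+ (Localization.AtPrime x ⊗[I → A] (∀ i, ↥((C i).X n)))),
        (∀ (β : B) (z : Localization.AtPrime x) (m : ∀ i, ↥((C i).X n)),
          φ (β • φ.symm (z ⊗ₜ m)) = z ⊗ₜ (fun i => β • m i)) →
        ∃ e : (N ⧸ tsIdealSMulTop b N) ≃+
            (Localization.AtPrime x ⊗[I → A]
              (∀ i, (↥((C i).X n) ⧸ tsIdealSMulTop b ↥((C i).X n)))),
          ∀ (z : Localization.AtPrime x) (m : ∀ i, ↥((C i).X n)),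
            e (Submodule.Quotient.mk (φ.symm (z ⊗ₜ m)))
              = z ⊗ₜ (fun i => Submodule.Quotient.mk (m i)) := by
  classical
  cases nonempty_fintype B
  intro n N instN instNB φ hφ
  letI inst1 : Module (I → A) (∀ i, ↥((C i).X n)) := piAModule A B I _
  letI inst2 : Module (I → A) (∀ i, (↥((C i).X n) ⧸ tsIdealSMulTop b ↥((C i).X n))) :=
    piAModule A B I _
  -- the finite "generating set" of b
  let F : Finset B := Finset.univ.filter (· ∈ b)
  have hF : ∀ β, β ∈ F ↔ β ∈ b := fun β => by simp [F]
  -- componentwise quotient map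
  let q : (∀ i, ↥((C i).X n)) →ₗ[I → A] (∀ i, (↥((C i).X n) ⧸ tsIdealSMulTop b ↥((C i).X n))) :=
    { toFun := fun m i => Submodule.Quotient.mk (m i)
      map_add' := fun m m' => rfl
      map_smul' := fun r m => funext fun i =>
        Submodule.Quotient.mk_smul (tsIdealSMulTop b ↥((C i).X n)) (algebraMap A B (r i)) (m i) }
  -- componentwise scalar multiplication by β, as an (I → A)-linear map
  let s : B → (∀ i, ↥((C i).X n)) →ₗ[I → A] (∀ i, ↥((C i).X n)) := fun β =>
    { toFun := fun m i => β • m i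
      map_add' := fun m m' => funext fun i => smul_add β (m i) (m' i)
      map_smul' := fun r m => funext fun i => by
        show β • (algebraMap A B (r i) • m i) = algebraMap A B (r i) • (β • m i)
        rw [smul_smul, smul_smul, Algebra.commutes] }
  have hqsurj : Function.Surjective q := fun w =>
    ⟨fun i => (Submodule.Quotient.mk_surjective _ (w i)).choose,
     funext fun i => (Submodule.Quotient.mk_surjective _ (w i)).choose_spec⟩
  set Φ := LinearMap.lTensor (Localization.AtPrime x) q with hΦdef
  have hΦsurj : Function.Surjective Φ := LinearMap.lTensor_surjective (Localization.AtPrime x) hqsurj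
  have hker : LinearMap.ker Φ = LinearMap.range (LinearMap.lTensor (Localization.AtPrime x) (LinearMap.ker q).subtype) :=
    LinearMap.exact_iff.mp (lTensor_exact (Localization.AtPrime x) q.exact_subtype_ker_map hqsurj)
  -- key computation
  have hkey : ∀ (β : B) (t : (Localization.AtPrime x) ⊗[I → A] (∀ i, ↥((C i).X n))),
      φ (β • φ.symm t) = LinearMap.lTensor (Localization.AtPrime x) (s β) t := by
    intro β t
    induction t with
    | zero => simp
    | tmul z m =>
        rw [LinearMap.lTensor_tmul]
        exact hφ β z m
    | add t t' ht ht' => rw [map_add, map_add, smul_add, map_add, ht, ht']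
  have hkey' : ∀ (β : B) (t : (Localization.AtPrime x) ⊗[I → A] (∀ i, ↥((C i).X n))),
      φ.symm (LinearMap.lTensor (Localization.AtPrime x) (s β) t) = β • φ.symm t := by
    intro β t
    rw [← hkey β t, φ.symm_apply_apply]
  have hqs : ∀ β ∈ b, q ∘ₗ s β = 0 := fun β hβ => LinearMap.ext fun m => funext fun i =>
    (Submodule.Quotient.mk_eq_zero _).mpr (Submodule.subset_span ⟨β, hβ, m i, rfl⟩)
  -- the kernel of Φ ∘ φ is exactly b·N
  have hfwd : ∀ w ∈ tsIdealSMulTop b N, Φ (φ w) = 0 := by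
    intro w hw
    obtain ⟨y, rfl⟩ := (mem_tsIdealSMulTop_iff b F hF w).mp hw
    rw [map_sum, map_sum]
    refine Finset.sum_eq_zero fun β hβ => ?_
    have h1 : φ (β • y β) = LinearMap.lTensor (Localization.AtPrime x) (s β) (φ (y β)) := by
      conv_lhs => rw [← φ.symm_apply_apply (y β)]
      exact hkey β (φ (y β))
    rw [h1, hΦdef, ← LinearMap.lTensor_comp_apply, hqs β ((hF β).mp hβ)]
    simp
  have hbwd : ∀ w : N, Φ (φ w) = 0 → w ∈ tsIdealSMulTop b N := by
    intro w hw
    have ht' : φ w ∈ LinearMap.ker Φ := hw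
    rw [hker] at ht'
    obtain ⟨u, hu⟩ := ht'
    have key : ∀ u : (Localization.AtPrime x) ⊗[I → A] ↥(LinearMap.ker q),
        φ.symm (LinearMap.lTensor (Localization.AtPrime x) (LinearMap.ker q).subtype u)
          ∈ tsIdealSMulTop b N := by
      intro u
      induction u with
      | zero => simp
      | tmul z k =>
          have hki : ∀ i, (k : (∀ i, ↥((C i).X n))) i ∈ tsIdealSMulTop b ↥((C i).X n) := by
            intro i
            have h0 : q (k : (∀ i, ↥((C i).X n))) = 0 := k.2
            have := congrFun h0 i
            exact (Submodule.Quotient.mk_eq_zero _).mp this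
          have hyi := fun i =>
            (mem_tsIdealSMulTop_iff b F hF ((k : (∀ i, ↥((C i).X n))) i)).mp (hki i)
          choose y hy using hyi
          have hk : (k : (∀ i, ↥((C i).X n))) = ∑ β ∈ F, s β (fun i => y i β) := by
            funext i
            rw [hy i, Finset.sum_apply]
            rfl
          have h2 : LinearMap.lTensor (Localization.AtPrime x) (LinearMap.ker q).subtype (z ⊗ₜ k)
              = ∑ β ∈ F, LinearMap.lTensor (Localization.AtPrime x) (s β)
                  (z ⊗ₜ (fun i => y i β)) := by
            rw [LinearMap.lTensor_tmul]
            show z ⊗ₜ (k : (∀ i, ↥((C i).X n))) = _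
            rw [hk, TensorProduct.tmul_sum]
            exact Finset.sum_congr rfl fun β _ =>
              (LinearMap.lTensor_tmul (Localization.AtPrime x) (s β) z _).symm
          rw [h2, map_sum]
          refine Submodule.sum_mem _ fun β hβ => ?_
          rw [hkey' β]
          exact Submodule.subset_span ⟨β, (hF β).mp hβ, _, rfl⟩
      | add u u' hu hu' =>
          rw [map_add, map_add]
          exact Submodule.add_mem _ hu hu'
    have := key u
    rw [hu, φ.symm_apply_apply] at this
    exact this
  -- assemble the equivalence
  let f0 : N →+ (Localization.AtPrime x ⊗[I → A]
      (∀ i, (↥((C i).X n) ⧸ tsIdealSMulTop b ↥((C i).X n)))) :=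
    Φ.toAddMonoidHom.comp (φ : N →+ _)
  have hf0 : (tsIdealSMulTop b N).toAddSubgroup ≤ f0.ker := fun w hw => hfwd w hw
  let f : (N ⧸ tsIdealSMulTop b N) →+ (Localization.AtPrime x ⊗[I → A]
      (∀ i, (↥((C i).X n) ⧸ tsIdealSMulTop b ↥((C i).X n)))) :=
    QuotientAddGroup.lift (tsIdealSMulTop b N).toAddSubgroup f0 hf0
  have hfmk : ∀ w : N, f (Submodule.Quotient.mk w) = Φ (φ w) := fun w => rfl
  have hbij : Function.Bijective f := by
    constructor
    · rw [injective_iff_map_eq_zero]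
      intro a ha
      obtain ⟨w, rfl⟩ := Submodule.Quotient.mk_surjective _ a
      rw [hfmk] at ha
      exact (Submodule.Quotient.mk_eq_zero _).mpr (hbwd w ha)
    · intro w
      obtain ⟨t, ht⟩ := hΦsurj w
      refine ⟨Submodule.Quotient.mk (φ.symm t), ?_⟩
      rw [hfmk, φ.apply_symm_apply, ht]
  refine ⟨AddEquiv.ofBijective f hbij, fun z m => ?_⟩
  show f (Submodule.Quotient.mk (φ.symm (z ⊗ₜ m))) = _
  rw [hfmk, φ.apply_symm_apply, hΦdef, LinearMap.lTensor_tmul]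
  rfl
end

section
/- Let B be a (possibly non-commutative) ring of finite cardinality and D a non-negative integer. If (F_i)_{i∈I} is a family of finitely generated free left B-modules, each of rank at most D, then the product ∏_{i∈I} F_i is a finitely generated projective left module over the product ring B_I = ∏_{i∈I} B. -/
/-!
STATEMENT 8: Let `B` be a (possibly non-commutative) ring of finite cardinality and `D` a
non-negative integer.  If `(F_i)_{i∈I}` is a family of finitely generated free left
`B`-modules, each of rank at most `D`, then the product `∏_{i∈I} F_i` is a finitely
generated projective left module over the product ring `B_I = ∏_{i∈I} B` (acting
componentwise).
-/

theorem stmt_8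
    (B : Type) [Ring B] [Finite B] (D : ℕ)
    (I : Type) (F : I → Type)
    [∀ i, AddCommGroup (F i)] [∀ i, Module B (F i)]
    (hfree : ∀ i, ∃ n : ℕ, n ≤ D ∧ Nonempty (F i ≃ₗ[B] (Fin n → B))) :
    Module.Finite (I → B) (∀ i, F i) ∧ Module.Projective (I → B) (∀ i, F i) := by
  choose n hnD he using hfree
  let e : ∀ i, F i ≃ₗ[B] (Fin (n i) → B) := fun i => (he i).some
  -- the retraction from the free module `Fin D → (I → B)`
  let f : (Fin D → (I → B)) →ₗ[I → B] (∀ i, F i) :=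
    { toFun := fun v i => (e i).symm (fun k => v (Fin.castLE (hnD i) k) i)
      map_add' := by
        intro v w
        funext i
        show (e i).symm _ = (e i).symm _ + (e i).symm _
        rw [← map_add]
        rfl
      map_smul' := by
        intro c v
        funext i
        show (e i).symm (fun k => (c • v) (Fin.castLE (hnD i) k) i) = c i • _
        rw [← map_smul]
        rfl }
  -- the section
  let s : (∀ i, F i) →ₗ[I → B] (Fin D → (I → B)) :=
    { toFun := fun x k i => if h : (k : ℕ) < n i then (e i) (x i) ⟨k, h⟩ else 0
      map_add' := by
        intro x y
        funext k i
        by_cases h : (k : ℕ) < n i <;> simp [h]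
      map_smul' := by
        intro c x
        funext k i
        by_cases h : (k : ℕ) < n i <;> simp [h, Pi.smul_apply, smul_eq_mul] }
  have hsplit : f.comp s = LinearMap.id := by
    apply LinearMap.ext
    intro x
    funext i
    show (e i).symm (fun k => if h : ((Fin.castLE (hnD i) k : Fin D) : ℕ) < n i
        then (e i) (x i) ⟨_, h⟩ else 0) = x i
    have : (fun k : Fin (n i) => if h : ((Fin.castLE (hnD i) k : Fin D) : ℕ) < n i
        then (e i) (x i) ⟨_, h⟩ else 0) = (e i) (x i) := by
      funext k
      simp [Fin.coe_castLE, k.isLt]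
    rw [this, (e i).symm_apply_apply]
  have hsurj : Function.Surjective f := by
    intro x
    exact ⟨s x, congrFun (congrArg DFunLike.coe hsplit) x⟩
  exact ⟨Module.Finite.of_surjective f hsurj, Module.Projective.of_split s f hsplit⟩
end
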